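/- Let K be a field of characteristic zero, A₁ = K⟨x,∂⟩ the first Weyl algebra acting on K[x], and 𝔸₁ the subalgebra of End_K(K[x]) generated by A₁ and H^{-1} where H = ∂x. Then F (the operators vanishing on x^i K[x] for some i) is the unique proper two-sided ideal of 𝔸₁; in particular F is a maximal ideal and every nonzero ideal of 𝔸₁ contains F. -/

import Mathlib

set_option synthInstance.maxHeartbeats 1000000
set_option maxHeartbeats 1000000

open Polynomial

/-- Multiplication by `x` on `K[x]`. -/
noncomputable def xO (K : Type*) [Field K] : Module.End K (Polynomial K) :=
  LinearMap.mulLeft K Polynomial.X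

/-- The derivative `∂` on `K[x]`. -/
noncomputable def dO (K : Type*) [Field K] : Module.End K (Polynomial K) :=
  (Polynomial.derivative : Polynomial K →ₗ[K] Polynomial K)

/-- The Jacobian algebra `𝔸₁`: the subalgebra of `End_K(K[x])` generated by the Weyl
algebra `K⟨x,∂⟩` together with the inverse of `H = ∂x`. -/
noncomputable def A1 (K : Type*) [Field K] : Subalgebra K (Module.End K (Polynomial K)) :=
  Algebra.adjoin K ({xO K, dO K} ∪
    {g | g * (dO K * xO K) = 1 ∧ (dO K * xO K) * g = 1})

/-- `I` is a two-sided ideal. -/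
def IsTwoSided {K A : Type*} [CommSemiring K] [Ring A] [Algebra K A]
    (I : Submodule K A) : Prop :=
  ∀ a ∈ I, ∀ r : A, r * a ∈ I ∧ a * r ∈ I

/-- The carrier of `F ⊆ 𝔸₁`: operators vanishing on `x^m K[x]` for some `m`. -/
def FCar (K : Type*) [Field K] : Set ↥(A1 K) :=
  {a | ∃ m : ℕ, ∀ p : Polynomial K,
    (a : Module.End K (Polynomial K)) (Polynomial.X ^ m * p) = 0}

/-!
Left multiplication preserves `F` trivially, and right multiplication does because every element
of `𝔸₁` maps `x ^ M K[x]` into `x ^ m K[x]` for `M` large. The matrix unit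
`E₀₀ = 1 - x H⁻¹ ∂` (projection onto the constants) together with `x` and `∂` produces every
matrix unit `E i j`, and `E₀ᵢ u Eⱼ₀` is a nonzero multiple of `E₀₀` for a suitable entry of
`u ≠ 0`, so every nonzero ideal contains all matrix units, hence `F`.

Every element of `𝔸₁` is banded in the monomial basis, and along each diagonal its entries are
eventually a rational function of `n`. If an ideal contains `u ∉ F`, some diagonal of `u` is not
eventually zero. Since `[H, ·]` multiplies the `d`-th diagonal by `d`, a polynomial in `[H, ·]`
isolates that diagonal, and a power of `∂` or of `x` moves it onto the main diagonal. Clearing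
denominators with a polynomial in `H`, modulo `F`, gives the diagonal operator `x ^ n ↦ f(n) x ^ n`
for a nonzero polynomial `f`. On such operators `H⁻¹ ∂ [·, x]` acts as the forward difference, so
`deg f` steps reach a nonzero scalar and the ideal is everything.
-/

namespace Polynomial

section Diagonal

variable {R M : Type*} [CommSemiring R] [AddCommMonoid M] [Module R M]

theorem lhom_ext_X_pow {f g : R[X] →ₗ[R] M} (h : ∀ n, f (X ^ n) = g (X ^ n)) : f = g := by
  ext n : 2
  simpa [← monomial_one_right_eq_X_pow] using h n

private noncomputable def diagonalOpAux (c : ℕ → R) : Module.End R R[X] :=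
  lsum fun n => c n • monomial n

private theorem diagonalOpAux_X_pow (c : ℕ → R) (n : ℕ) :
    diagonalOpAux c (X ^ n) = c n • X ^ n := by
  simp [diagonalOpAux, ← monomial_one_right_eq_X_pow, sum_monomial_index, smul_monomial]

noncomputable def diagonalOp : (ℕ → R) →ₐ[R] Module.End R R[X] where
  toFun := diagonalOpAux
  map_one' := lhom_ext_X_pow fun n => by simp [diagonalOpAux_X_pow]
  map_mul' c d := lhom_ext_X_pow fun n => by
    simp [diagonalOpAux_X_pow, smul_smul, mul_comm]
  map_zero' := lhom_ext_X_pow fun n => by simp [diagonalOpAux_X_pow]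
  map_add' c d := lhom_ext_X_pow fun n => by simp [diagonalOpAux_X_pow, add_smul]
  commutes' a := lhom_ext_X_pow fun n => by simp [diagonalOpAux_X_pow]

@[simp]
theorem diagonalOp_X_pow (c : ℕ → R) (n : ℕ) : diagonalOp c (X ^ n) = c n • X ^ n :=
  diagonalOpAux_X_pow c n

theorem coeff_diagonalOp (c : ℕ → R) (p : R[X]) (k : ℕ) :
    (diagonalOp c p).coeff k = c k * p.coeff k := by
  change (lcoeff R k ∘ₗ diagonalOp c) p = (c k • lcoeff R k) p
  congr 1
  refine lhom_ext_X_pow fun n => ?_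
  by_cases h : k = n <;> simp [coeff_X_pow, h]

end Diagonal

end Polynomial

open Filter

section

variable {K : Type*} [Field K]

theorem xO_X_pow (n : ℕ) : xO K (X ^ n) = X ^ (n + 1) := by
  simp [xO, pow_succ']

theorem xO_pow_X_pow (k n : ℕ) : (xO K ^ k) (X ^ n) = X ^ (n + k) := by
  simp [xO, LinearMap.pow_mulLeft, pow_add, mul_comm]

theorem dO_pow_X_pow (k n : ℕ) :
    (dO K ^ k) (X ^ n) = (n.descFactorial k : K) • X ^ (n - k) := by
  simp [dO, Module.End.pow_apply, iterate_derivative_X_pow_eq_smul]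

theorem dO_X_pow_succ (n : ℕ) : dO K (X ^ (n + 1)) = ((n : K) + 1) • X ^ n := by
  simp [dO, smul_eq_C_mul]

theorem dO_mul_xO : dO K * xO K = diagonalOp fun n => (n : K) + 1 := by
  refine lhom_ext_X_pow fun n => ?_
  simp [dO, xO_X_pow, smul_eq_C_mul]

theorem xO_mem_A1 : xO K ∈ A1 K := Algebra.subset_adjoin (.inl (.inl rfl))

theorem dO_mem_A1 : dO K ∈ A1 K := Algebra.subset_adjoin (.inl (.inr rfl))

noncomputable def hInv (K : Type*) [Field K] : Module.End K K[X] :=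
  diagonalOp fun n => ((n : K) + 1)⁻¹

theorem diagonalOp_eval_mem_A1 (f : K[X]) : diagonalOp (fun n => f.eval (n : K)) ∈ A1 K := by
  have hn : diagonalOp (fun n : ℕ => (n : K)) ∈ A1 K := by
    have : diagonalOp (fun n : ℕ => (n : K)) = dO K * xO K - 1 := by
      rw [dO_mul_xO, ← map_one diagonalOp, ← map_sub]
      congr 1
      funext n
      simp
    rw [this]
    exact sub_mem (mul_mem dO_mem_A1 xO_mem_A1) (one_mem _)
  have : diagonalOp (fun n => f.eval (n : K)) = aeval (diagonalOp fun n : ℕ => (n : K)) f := by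
    rw [aeval_algHom_apply, aeval_pi_apply]
    rfl
  have hmem := (aeval (⟨_, hn⟩ : A1 K) f).2
  rwa [coe_aeval_mk_apply, ← this] at hmem

section CharZero

variable [CharZero K]

theorem hInv_mul_dO_mul_xO : hInv K * (dO K * xO K) = 1 := by
  rw [hInv, dO_mul_xO, ← map_mul, ← map_one diagonalOp]
  congr 1
  funext n
  exact inv_mul_cancel₀ n.cast_add_one_ne_zero

theorem dO_mul_xO_mul_hInv : dO K * xO K * hInv K = 1 := by
  rw [hInv, dO_mul_xO, ← map_mul, ← map_one diagonalOp]
  congr 1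
  funext n
  exact mul_inv_cancel₀ n.cast_add_one_ne_zero

theorem hInv_mem_A1 : hInv K ∈ A1 K :=
  Algebra.subset_adjoin (.inr ⟨hInv_mul_dO_mul_xO, dO_mul_xO_mul_hInv⟩)

@[elab_as_elim]
theorem A1_induction {P : ∀ u, u ∈ A1 K → Prop} (hx : P (xO K) xO_mem_A1)
    (hd : P (dO K) dO_mem_A1) (hh : P (hInv K) hInv_mem_A1)
    (hc : ∀ c, P (algebraMap K _ c) (algebraMap_mem _ c))
    (hadd : ∀ u v hu hv, P u hu → P v hv → P (u + v) (add_mem hu hv))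
    (hmul : ∀ u v hu hv, P u hu → P v hv → P (u * v) (mul_mem hu hv))
    {u : Module.End K K[X]} (hu : u ∈ A1 K) : P u hu := by
  induction hu using Algebra.adjoin_induction with
  | mem g hg =>
    rcases hg with (rfl | rfl) | ⟨hg, -⟩
    · exact hx
    · exact hd
    · obtain rfl : g = hInv K :=
        calc g = g * (dO K * xO K * hInv K) := by rw [dO_mul_xO_mul_hInv, mul_one]
          _ = hInv K := by rw [← mul_assoc, hg, one_mul]
      exact hh
  | algebraMap c => exact hc c
  | add u v hu hv ihu ihv => exact hadd u v hu hv ihu ihv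
  | mul u v hu hv ihu ihv => exact hmul u v hu hv ihu ihv

end CharZero

section FIdeal

theorem mem_FCar_iff {a : ↥(A1 K)} :
    a ∈ FCar K ↔ ∀ᶠ n in atTop, (a : Module.End K K[X]) (X ^ n) = 0 := by
  refine ⟨fun ⟨m, hm⟩ => eventually_atTop.2 ⟨m, fun n hn => ?_⟩, fun h => ?_⟩
  · simpa [← pow_mul_pow_sub (X : K[X]) hn] using hm (X ^ (n - m))
  · obtain ⟨m, hm⟩ := eventually_atTop.1 h
    refine ⟨m, fun p => ?_⟩
    change ((a : Module.End K K[X]) ∘ₗ LinearMap.mulLeft K (X ^ m)) p = (0 : Module.End K K[X]) p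
    congr 1
    exact lhom_ext_X_pow fun n => by simpa [← pow_add] using hm (m + n) (by omega)

def fIdeal (K : Type*) [Field K] : Submodule K ↥(A1 K) where
  carrier := FCar K
  zero_mem' := mem_FCar_iff.2 (by simp)
  add_mem' ha hb := mem_FCar_iff.2 <| (mem_FCar_iff.1 ha).and (mem_FCar_iff.1 hb) |>.mono
    fun n h => by simp [h.1, h.2]
  smul_mem' c a ha := mem_FCar_iff.2 <| (mem_FCar_iff.1 ha).mono fun n h => by simp [h]

theorem mem_fIdeal_iff {a : ↥(A1 K)} :
    a ∈ fIdeal K ↔ ∀ᶠ n in atTop, (a : Module.End K K[X]) (X ^ n) = 0 :=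
  mem_FCar_iff

theorem fIdeal_ne_top : fIdeal K ≠ ⊤ := fun h => by
  obtain ⟨n, hn⟩ := (mem_fIdeal_iff.1 (h ▸ Submodule.mem_top : (1 : ↥(A1 K)) ∈ fIdeal K)).exists
  exact pow_ne_zero n X_ne_zero hn

variable [CharZero K]

theorem exists_X_pow_dvd_apply_X_pow_mul {u : Module.End K K[X]} (hu : u ∈ A1 K) (m : ℕ) :
    ∃ M, ∀ p, X ^ m ∣ u (X ^ M * p) := by
  have diagonal (c : ℕ → K) (m : ℕ) : ∃ M, ∀ p, X ^ m ∣ diagonalOp c (X ^ M * p) :=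
    ⟨m, fun p => X_pow_dvd_iff.2 fun d hd => by
      rw [coeff_diagonalOp, coeff_X_pow_mul', if_neg (by omega), mul_zero]⟩
  induction hu using A1_induction generalizing m with
  | hx => exact ⟨m, fun p => ⟨X * p, by simp [xO]; ring⟩⟩
  | hd => exact ⟨m + 1, fun p => X_pow_dvd_iff.2 fun d hd => by
      change (derivative (X ^ (m + 1) * p)).coeff d = 0
      rw [coeff_derivative, coeff_X_pow_mul', if_neg (by omega), zero_mul]⟩
  | hh => exact diagonal _ m
  | hc c => simpa using diagonal (algebraMap K _ c) m
  | hadd u v _ _ hu hv =>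
    obtain ⟨M₁, h₁⟩ := hu m
    obtain ⟨M₂, h₂⟩ := hv m
    refine ⟨M₁ + M₂, fun p => ?_⟩
    rw [LinearMap.add_apply, pow_add, mul_assoc]
    refine dvd_add (h₁ _) ?_
    rw [mul_left_comm]
    exact h₂ _
  | hmul u v _ _ hu hv =>
    obtain ⟨M₁, h₁⟩ := hu m
    obtain ⟨M₂, h₂⟩ := hv M₁
    refine ⟨M₂, fun p => ?_⟩
    obtain ⟨q, hq⟩ := h₂ p
    simpa [hq] using h₁ q

theorem fIdeal_isTwoSided : IsTwoSided (K := K) (A := ↥(A1 K)) (fIdeal K) := by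
  intro a ha r
  obtain ⟨m, hm⟩ : a ∈ FCar K := ha
  refine ⟨⟨m, fun p => by simp [hm]⟩, ?_⟩
  obtain ⟨M, hM⟩ := exists_X_pow_dvd_apply_X_pow_mul r.2 m
  refine ⟨M, fun p => ?_⟩
  obtain ⟨q, hq⟩ := hM p
  simp [hq, hm]

end FIdeal

section MatrixUnits

noncomputable def matUnit (K : Type*) [Field K] (i j : ℕ) : Module.End K K[X] :=
  (lcoeff K j).smulRight (X ^ i)

theorem matUnit_apply (i j : ℕ) (p : K[X]) : matUnit K i j p = p.coeff j • X ^ i := rfl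

theorem matUnit_mul_mul_matUnit (k i j l : ℕ) (u : Module.End K K[X]) :
    matUnit K k i * u * matUnit K j l = (u (X ^ j)).coeff i • matUnit K k l := by
  refine LinearMap.ext fun p => ?_
  simp only [Module.End.mul_apply, matUnit_apply, map_smul,
    LinearMap.smul_apply, smul_smul, mul_comm]

variable [CharZero K]

theorem one_sub_xO_mul_hInv_mul_dO : 1 - xO K * hInv K * dO K = matUnit K 0 0 := by
  refine lhom_ext_X_pow fun n => ?_
  rcases n with _ | n
  · simp [matUnit_apply, dO]
  · have hn : ((n : K) + 1) * ((n : K) + 1)⁻¹ = 1 := mul_inv_cancel₀ n.cast_add_one_ne_zero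
    simp [matUnit_apply, hInv, dO_X_pow_succ, smul_smul, hn, xO_X_pow]

theorem matUnit_mem_A1 (i j : ℕ) : matUnit K i j ∈ A1 K := by
  have h : matUnit K i j = xO K ^ i * matUnit K 0 0 * ((j.factorial : K)⁻¹ • dO K ^ j) := by
    refine lhom_ext_X_pow fun n => ?_
    simp only [Module.End.mul_apply, LinearMap.smul_apply, dO_pow_X_pow, matUnit_apply,
      map_smul, coeff_X_pow, xO_pow_X_pow, zero_add]
    rcases lt_trichotomy n j with hn | rfl | hn
    · simp [Nat.descFactorial_eq_zero_iff_lt.2 hn, show ¬ j = n by omega]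
    · simp [Nat.descFactorial_self, Nat.factorial_ne_zero n]
    · simp [show ¬ j = n by omega, show ¬ 0 = n - j by omega]
  rw [h, ← one_sub_xO_mul_hInv_mul_dO]
  refine mul_mem (mul_mem (pow_mem xO_mem_A1 i) ?_) (Subalgebra.smul_mem _ (pow_mem dO_mem_A1 j) _)
  exact sub_mem (one_mem _) (mul_mem (mul_mem xO_mem_A1 hInv_mem_A1) dO_mem_A1)

theorem matUnit_mem_fIdeal : ⟨matUnit K 0 0, matUnit_mem_A1 0 0⟩ ∈ fIdeal K :=
  mem_fIdeal_iff.2 <| eventually_atTop.2 ⟨1, fun n hn => by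
    simp [matUnit_apply, coeff_X_pow, show 0 ≠ n by omega]⟩

theorem fIdeal_ne_bot : fIdeal K ≠ ⊥ := fun h => by
  have h0 := matUnit_mem_fIdeal (K := K)
  rw [h, Submodule.mem_bot, Subtype.ext_iff] at h0
  simpa [matUnit_apply] using LinearMap.congr_fun h0 1

end MatrixUnits

section Ideals

noncomputable def endImage (I : Submodule K ↥(A1 K)) : Submodule K (Module.End K K[X]) :=
  I.map (A1 K).val.toLinearMap

variable {I : Submodule K ↥(A1 K)}

theorem coe_mem_endImage {a : ↥(A1 K)} : (a : Module.End K K[X]) ∈ endImage I ↔ a ∈ I :=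
  ⟨fun ⟨_, hb, hba⟩ => Subtype.val_injective hba ▸ hb, Submodule.mem_map_of_mem⟩

theorem mem_A1_of_mem_endImage {u : Module.End K K[X]} (hu : u ∈ endImage I) : u ∈ A1 K := by
  obtain ⟨a, -, rfl⟩ := hu
  exact a.2

theorem IsTwoSided.mul_mem_endImage_left (hI : IsTwoSided (K := K) (A := ↥(A1 K)) I)
    {a u : Module.End K K[X]} (ha : a ∈ A1 K) (hu : u ∈ endImage I) : a * u ∈ endImage I := by
  obtain ⟨b, hb, rfl⟩ := hu
  exact coe_mem_endImage.2 (hI b hb ⟨a, ha⟩).1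

theorem IsTwoSided.mul_mem_endImage_right (hI : IsTwoSided (K := K) (A := ↥(A1 K)) I)
    {a u : Module.End K K[X]} (ha : a ∈ A1 K) (hu : u ∈ endImage I) : u * a ∈ endImage I := by
  obtain ⟨b, hb, rfl⟩ := hu
  exact coe_mem_endImage.2 (hI b hb ⟨a, ha⟩).2

variable [CharZero K]

theorem IsTwoSided.matUnit_mem_endImage (hI : IsTwoSided (K := K) (A := ↥(A1 K)) I)
    (hne : I ≠ ⊥) (i j : ℕ) : matUnit K i j ∈ endImage I := by
  obtain ⟨a, haI, ha⟩ := (Submodule.ne_bot_iff I).1 hne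
  obtain ⟨j₀, hj₀⟩ : ∃ j₀, (a : Module.End K K[X]) (X ^ j₀) ≠ 0 := by
    by_contra! h
    exact ha (Subtype.ext (lhom_ext_X_pow fun n => by simp [h n]))
  obtain ⟨i₀, hi₀⟩ : ∃ i₀, ((a : Module.End K K[X]) (X ^ j₀)).coeff i₀ ≠ 0 := by
    by_contra! h
    exact hj₀ (Polynomial.ext h)
  have h00 : matUnit K 0 0 ∈ endImage I := by
    have hmem := hI.mul_mem_endImage_right (matUnit_mem_A1 j₀ 0) <|
      hI.mul_mem_endImage_left (matUnit_mem_A1 0 i₀) (coe_mem_endImage.2 haI)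
    rw [matUnit_mul_mul_matUnit] at hmem
    simpa [smul_smul, inv_mul_cancel₀ hi₀] using Submodule.smul_mem _
      (((a : Module.End K K[X]) (X ^ j₀)).coeff i₀)⁻¹ hmem
  have hij := hI.mul_mem_endImage_right (matUnit_mem_A1 0 j) <|
    hI.mul_mem_endImage_left (matUnit_mem_A1 i 0) h00
  simpa [matUnit_mul_mul_matUnit, matUnit_apply] using hij

theorem IsTwoSided.mem_endImage_of_eventually_eq_zero (hI : IsTwoSided (K := K) (A := ↥(A1 K)) I)
    (hne : I ≠ ⊥) {u : Module.End K K[X]} (hu : u ∈ A1 K)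
    (h : ∀ᶠ n in atTop, u (X ^ n) = 0) : u ∈ endImage I := by
  obtain ⟨m, hm⟩ := eventually_atTop.1 h
  have hsum : u = ∑ j ∈ Finset.range m, u * matUnit K j j := by
    refine lhom_ext_X_pow fun n => ?_
    simp only [LinearMap.sum_apply, Module.End.mul_apply, matUnit_apply,
      coeff_X_pow, ite_smul, one_smul, zero_smul, map_zero, apply_ite (u : _ → _),
      Finset.sum_ite_eq', Finset.mem_range]
    split_ifs with hn
    · rfl
    · exact hm n (not_lt.1 hn)
  rw [hsum]
  exact Submodule.sum_mem _ fun j _ => hI.mul_mem_endImage_left hu (hI.matUnit_mem_endImage hne j j)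

theorem IsTwoSided.fIdeal_le (hI : IsTwoSided (K := K) (A := ↥(A1 K)) I) (hne : I ≠ ⊥) :
    fIdeal K ≤ I := fun a ha =>
  coe_mem_endImage.1 (hI.mem_endImage_of_eventually_eq_zero hne a.2 (mem_fIdeal_iff.1 ha))

end Ideals

section EventuallyRational

def EventuallyRational (φ : ℕ → K) : Prop :=
  ∃ f g : K[X], g ≠ 0 ∧ ∀ᶠ n in atTop, φ n * g.eval (n : K) = f.eval (n : K)

namespace EventuallyRational

variable {φ ψ : ℕ → K}

theorem congr (hφ : EventuallyRational φ) (h : φ =ᶠ[atTop] ψ) : EventuallyRational ψ := by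
  obtain ⟨f, g, hg, hfg⟩ := hφ
  exact ⟨f, g, hg, (hfg.and h).mono fun n hn => hn.2 ▸ hn.1⟩

theorem polynomial_eval (f : K[X]) : EventuallyRational fun n => f.eval (n : K) :=
  ⟨f, 1, one_ne_zero, .of_forall fun n => by simp⟩

theorem const (c : K) : EventuallyRational fun _ => c := by
  simpa using polynomial_eval (C c)

theorem add (hφ : EventuallyRational φ) (hψ : EventuallyRational ψ) :
    EventuallyRational (φ + ψ) := by
  obtain ⟨f₁, g₁, hg₁, h₁⟩ := hφ
  obtain ⟨f₂, g₂, hg₂, h₂⟩ := hψ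
  refine ⟨f₁ * g₂ + f₂ * g₁, g₁ * g₂, mul_ne_zero hg₁ hg₂, (h₁.and h₂).mono fun n hn => ?_⟩
  simp only [Pi.add_apply, eval_add, eval_mul, ← hn.1, ← hn.2]
  ring

theorem mul (hφ : EventuallyRational φ) (hψ : EventuallyRational ψ) :
    EventuallyRational (φ * ψ) := by
  obtain ⟨f₁, g₁, hg₁, h₁⟩ := hφ
  obtain ⟨f₂, g₂, hg₂, h₂⟩ := hψ
  refine ⟨f₁ * f₂, g₁ * g₂, mul_ne_zero hg₁ hg₂, (h₁.and h₂).mono fun n hn => ?_⟩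
  simp only [Pi.mul_apply, eval_mul, ← hn.1, ← hn.2]
  ring

theorem sum {ι : Type*} (s : Finset ι) {φ : ι → ℕ → K} (h : ∀ i ∈ s, EventuallyRational (φ i)) :
    EventuallyRational fun n => ∑ i ∈ s, φ i n := by
  classical
  induction s using Finset.induction_on with
  | empty => simpa using const (0 : K)
  | insert a s ha ih =>
    simp only [Finset.sum_insert ha]
    exact (h a (s.mem_insert_self a)).add (ih fun i hi => h i (Finset.mem_insert_of_mem hi))

theorem comp (hφ : EventuallyRational φ) {s : ℕ → ℕ} (hs : Tendsto s atTop atTop) (c : K)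
    (hsc : ∀ᶠ n in atTop, (s n : K) = n + c) : EventuallyRational (φ ∘ s) := by
  obtain ⟨f, g, hg, hfg⟩ := hφ
  refine ⟨f.comp (X + C c), g.comp (X + C c), ?_, ((hs.eventually hfg).and hsc).mono
    fun n hn => by simpa [hn.2] using hn.1⟩
  rw [Ne, comp_eq_zero_iff]
  rintro (h | ⟨-, h⟩)
  · exact hg h
  · simpa using congrArg (coeff · 1) h

end EventuallyRational

theorem Polynomial.eventually_eval_natCast_ne_zero [CharZero K] {g : K[X]} (hg : g ≠ 0) :
    ∀ᶠ n : ℕ in atTop, g.eval (n : K) ≠ 0 := by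
  classical
  have hfin : {n : ℕ | g.eval (n : K) = 0}.Finite :=
    (g.roots.toFinset.finite_toSet.preimage Nat.cast_injective.injOn).subset
      fun n hn => by simpa [hg] using hn
  simpa [← Nat.cofinite_eq_atTop] using hfin.eventually_cofinite_notMem

end EventuallyRational

section Diagonals

noncomputable def lcoeffInt (k : ℤ) : K[X] →ₗ[K] K :=
  if 0 ≤ k then lcoeff K k.toNat else 0

theorem lcoeffInt_of_neg {k : ℤ} (hk : k < 0) (p : K[X]) : lcoeffInt k p = 0 := by
  simp [lcoeffInt, not_le.2 hk]

theorem lcoeffInt_natCast (i : ℕ) (p : K[X]) : lcoeffInt i p = p.coeff i := by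
  simp [lcoeffInt]

theorem lcoeffInt_X_pow (k : ℤ) (m : ℕ) : lcoeffInt k (X ^ m : K[X]) = if k = m then 1 else 0 := by
  rcases lt_or_ge k 0 with hk | hk
  · rw [lcoeffInt_of_neg hk, if_neg (by omega)]
  · lift k to ℕ using hk
    simp [lcoeffInt_natCast, coeff_X_pow]

theorem lcoeffInt_diagonalOp (c : ℕ → K) (k : ℤ) (p : K[X]) :
    lcoeffInt k (diagonalOp c p) = c k.toNat * lcoeffInt k p := by
  rcases lt_or_ge k 0 with hk | hk
  · simp [lcoeffInt_of_neg hk]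
  · lift k to ℕ using hk
    simp [lcoeffInt_natCast, coeff_diagonalOp]

/-- The entry of `u` in row `n + d` and column `n` of its matrix in the basis `x ^ n`. -/
noncomputable def diagEntry (u : Module.End K K[X]) (d : ℤ) (n : ℕ) : K :=
  lcoeffInt (n + d) (u (X ^ n))

theorem diagEntry_of_neg {u : Module.End K K[X]} {d : ℤ} {n : ℕ} (h : n + d < 0) :
    diagEntry u d n = 0 :=
  lcoeffInt_of_neg h _

theorem coeff_apply_X_pow (u : Module.End K K[X]) (i n : ℕ) :
    (u (X ^ n)).coeff i = diagEntry u (i - n) n := by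
  simp [diagEntry, ← lcoeffInt_natCast]

@[simp]
theorem diagEntry_add (u v : Module.End K K[X]) (d : ℤ) (n : ℕ) :
    diagEntry (u + v) d n = diagEntry u d n + diagEntry v d n := by
  simp [diagEntry]

@[simp]
theorem diagEntry_sub (u v : Module.End K K[X]) (d : ℤ) (n : ℕ) :
    diagEntry (u - v) d n = diagEntry u d n - diagEntry v d n := by
  simp [diagEntry]

@[simp]
theorem diagEntry_smul (c : K) (u : Module.End K K[X]) (d : ℤ) (n : ℕ) :
    diagEntry (c • u) d n = c * diagEntry u d n := by
  simp [diagEntry]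

theorem diagEntry_diagonalOp (c : ℕ → K) (d : ℤ) (n : ℕ) :
    diagEntry (diagonalOp c) d n = if d = 0 then c n else 0 := by
  simp [diagEntry, lcoeffInt_X_pow]

theorem diagEntry_xO (d : ℤ) (n : ℕ) : diagEntry (xO K) d n = if d = 1 then 1 else 0 := by
  simp [diagEntry, xO_X_pow, lcoeffInt_X_pow]

theorem diagEntry_dO (d : ℤ) (n : ℕ) : diagEntry (dO K) d n = if d = -1 then (n : K) else 0 := by
  rcases n with _ | n
  · simp [diagEntry, dO]
  · rw [diagEntry, dO_X_pow_succ, map_smul, lcoeffInt_X_pow]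
    split_ifs <;> first | omega | simp

theorem diagEntry_diagonalOp_mul (c : ℕ → K) (u : Module.End K K[X]) (d : ℤ) (n : ℕ) :
    diagEntry (diagonalOp c * u) d n = c (n + d).toNat * diagEntry u d n := by
  simp [diagEntry, lcoeffInt_diagonalOp]

theorem diagEntry_mul_diagonalOp (c : ℕ → K) (u : Module.End K K[X]) (d : ℤ) (n : ℕ) :
    diagEntry (u * diagonalOp c) d n = c n * diagEntry u d n := by
  simp [diagEntry]

theorem natCast_toNat_add {n : ℕ} {d : ℤ} (h : 0 ≤ n + d) : (((n + d).toNat : ℕ) : K) = n + d := by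
  rw [← Int.cast_natCast, Int.toNat_of_nonneg h]
  push_cast
  rfl

theorem diagEntry_commutator_dO_mul_xO (u : Module.End K K[X]) (d : ℤ) (n : ℕ) :
    diagEntry (dO K * xO K * u - u * (dO K * xO K)) d n = d * diagEntry u d n := by
  rw [diagEntry_sub, dO_mul_xO, diagEntry_diagonalOp_mul, diagEntry_mul_diagonalOp]
  rcases lt_or_ge ((n : ℤ) + d) 0 with h | h
  · simp [diagEntry_of_neg h]
  · rw [natCast_toNat_add h]
    ring

theorem apply_X_pow_eq_sum {v : Module.End K K[X]} {n : ℕ} (S : Finset ℤ)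
    (hS : ∀ e ∉ S, diagEntry v e n = 0) :
    v (X ^ n) = ∑ e ∈ S, diagEntry v e n • X ^ (n + e).toNat := by
  ext i
  have hterm : ∀ e ∈ S, diagEntry v e n * (X ^ (n + e).toNat : K[X]).coeff i =
      if e = i - n then diagEntry v e n else 0 := by
    intro e _
    rcases lt_or_ge ((n : ℤ) + e) 0 with h | h
    · simp [diagEntry_of_neg h]
    · simp only [coeff_X_pow]
      split_ifs <;> first | omega | simp
  simp only [finsetSum_coeff, coeff_smul, smul_eq_mul]
  rw [Finset.sum_congr rfl hterm, Finset.sum_ite_eq', coeff_apply_X_pow]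
  split_ifs with h
  · rfl
  · exact hS _ h

theorem diagEntry_mul {u v : Module.End K K[X]} {n : ℕ} (S : Finset ℤ)
    (hS : ∀ e ∉ S, diagEntry v e n = 0) (d : ℤ) :
    diagEntry (u * v) d n = ∑ e ∈ S, diagEntry v e n * diagEntry u (d - e) (n + e).toNat := by
  rw [diagEntry, Module.End.mul_apply, apply_X_pow_eq_sum S hS]
  simp only [map_sum, map_smul, smul_eq_mul]
  refine Finset.sum_congr rfl fun e _ => ?_
  rcases lt_or_ge ((n : ℤ) + e) 0 with h | h
  · simp [diagEntry_of_neg h]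
  · simp only [diagEntry]
    congr 3
    omega

def IsBanded (u : Module.End K K[X]) (D : ℕ) : Prop :=
  ∀ d n, (D : ℤ) < |d| → diagEntry u d n = 0

theorem IsBanded.diagEntry_eq_zero_of_notMem {u : Module.End K K[X]} {D : ℕ} (hu : IsBanded u D)
    {d : ℤ} (hd : d ∉ Finset.Icc (-(D : ℤ)) D) (n : ℕ) : diagEntry u d n = 0 :=
  hu d n (by rw [Finset.mem_Icc, ← abs_le] at hd; omega)

end Diagonals

section BandedRational

theorem isBanded_and_eventuallyRational_of_diagEntry_eq {u : Module.End K K[X]} {d : ℤ}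
    {c : ℕ → K} (hc : EventuallyRational c)
    (hu : ∀ e n, diagEntry u e n = if e = d then c n else 0) :
    IsBanded u d.natAbs ∧ ∀ e, EventuallyRational (diagEntry u e) := by
  refine ⟨fun e n he => by rw [hu, if_neg (by rintro rfl; simp at he)], fun e => ?_⟩
  by_cases he : e = d
  · exact hc.congr (.of_forall fun n => by simp [hu, he])
  · exact (EventuallyRational.const 0).congr (.of_forall fun n => by simp [hu, he])

variable [CharZero K]

theorem isBanded_and_eventuallyRational_of_mem_A1 {u : Module.End K K[X]} (hu : u ∈ A1 K) :
    (∃ D, IsBanded u D) ∧ ∀ d, EventuallyRational (diagEntry u d) := by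
  have diagonal {c : ℕ → K} (hc : EventuallyRational c) :
      (∃ D, IsBanded (diagonalOp c) D) ∧ ∀ d, EventuallyRational (diagEntry (diagonalOp c) d) :=
    have h := isBanded_and_eventuallyRational_of_diagEntry_eq hc (diagEntry_diagonalOp c)
    ⟨⟨_, h.1⟩, h.2⟩
  induction hu using A1_induction with
  | hx =>
    have h := isBanded_and_eventuallyRational_of_diagEntry_eq (.const (1 : K)) diagEntry_xO
    exact ⟨⟨_, h.1⟩, h.2⟩
  | hd =>
    have h := isBanded_and_eventuallyRational_of_diagEntry_eq (c := fun n => (n : K))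
      ⟨X, 1, one_ne_zero, .of_forall fun n => by simp⟩ diagEntry_dO
    exact ⟨⟨_, h.1⟩, h.2⟩
  | hh =>
    refine diagonal ⟨1, X + 1, X_add_C_ne_zero 1, .of_forall fun n => ?_⟩
    simp [inv_mul_cancel₀ (n.cast_add_one_ne_zero : (n : K) + 1 ≠ 0)]
  | hc c =>
    rw [← diagonalOp.commutes]
    exact diagonal (.const c)
  | hadd u v _ _ hu hv =>
    obtain ⟨⟨D₁, hb₁⟩, hr₁⟩ := hu
    obtain ⟨⟨D₂, hb₂⟩, hr₂⟩ := hv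
    refine ⟨⟨max D₁ D₂, fun d n hd => ?_⟩, fun d => ?_⟩
    · rw [diagEntry_add, hb₁ d n (by omega), hb₂ d n (by omega), add_zero]
    · exact ((hr₁ d).add (hr₂ d)).congr (.of_forall fun n => (diagEntry_add u v d n).symm)
  | hmul u v _ _ hu hv =>
    obtain ⟨⟨D₁, hb₁⟩, hr₁⟩ := hu
    obtain ⟨⟨D₂, hb₂⟩, hr₂⟩ := hv
    have hmul := fun n => diagEntry_mul (u := u) (n := n) _ fun e he =>
      hb₂.diagEntry_eq_zero_of_notMem he n
    refine ⟨⟨D₁ + D₂, fun d n hd => ?_⟩, fun d => ?_⟩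
    · rw [hmul]
      refine Finset.sum_eq_zero fun e he => ?_
      rw [Finset.mem_Icc] at he
      rw [hb₁ _ _ (by rw [lt_abs] at hd ⊢; push_cast at hd; omega), mul_zero]
    · refine (EventuallyRational.sum _ fun e _ => (hr₂ e).mul ((hr₁ (d - e)).comp ?_ e ?_)).congr
        (.of_forall fun n => (hmul n d).symm)
      · exact tendsto_atTop_atTop.2 fun b => ⟨b + e.natAbs, fun n hn => by omega⟩
      · exact eventually_atTop.2 ⟨e.natAbs, fun n hn => natCast_toNat_add (by omega)⟩

end BandedRational

section Simplicity

variable [CharZero K] {I : Submodule K ↥(A1 K)}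

theorem hInv_mul_dO_mul_commutator_xO (c : ℕ → K) :
    hInv K * dO K * (diagonalOp c * xO K - xO K * diagonalOp c) =
      diagonalOp fun n => c (n + 1) - c n := by
  refine lhom_ext_X_pow fun n => ?_
  have hn : ((n : K) + 1) * ((n : K) + 1)⁻¹ = 1 := mul_inv_cancel₀ n.cast_add_one_ne_zero
  simp only [Module.End.mul_apply, LinearMap.sub_apply, diagonalOp_X_pow, xO_X_pow, map_smul,
    ← sub_smul, dO_X_pow_succ, hInv, smul_smul]
  rw [hn, mul_one]

theorem IsTwoSided.diagonalOp_fwdDiff_iterate_mem_endImage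
    (hI : IsTwoSided (K := K) (A := ↥(A1 K)) I) {φ : K → K}
    (h : diagonalOp (fun n => φ n) ∈ endImage I) (k : ℕ) :
    diagonalOp (fun n => (fwdDiff 1)^[k] φ n) ∈ endImage I := by
  induction k with
  | zero => exact h
  | succ k ih =>
    have hmem := hI.mul_mem_endImage_left (mul_mem hInv_mem_A1 dO_mem_A1) <|
      sub_mem (hI.mul_mem_endImage_right xO_mem_A1 ih) (hI.mul_mem_endImage_left xO_mem_A1 ih)
    rw [hInv_mul_dO_mul_commutator_xO] at hmem
    simpa [Function.iterate_succ_apply', fwdDiff] using hmem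

theorem IsTwoSided.one_mem_endImage_of_diagonalOp_eval
    (hI : IsTwoSided (K := K) (A := ↥(A1 K)) I) {f : K[X]} (hf : f ≠ 0)
    (h : diagonalOp (fun n => f.eval (n : K)) ∈ endImage I) :
    (1 : Module.End K K[X]) ∈ endImage I := by
  have hconst := hI.diagonalOp_fwdDiff_iterate_mem_endImage (φ := f.eval) h f.natDegree
  rw [fwdDiff_iter_degree_eq_factorial] at hconst
  set c : K := f.leadingCoeff * f.natDegree.factorial
  have hc : c ≠ 0 :=
    mul_ne_zero (leadingCoeff_ne_zero.2 hf) (Nat.cast_ne_zero.2 (Nat.factorial_ne_zero _))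
  have hc1 : c • (1 : Module.End K K[X]) ∈ endImage I := by
    rw [← Algebra.algebraMap_eq_smul_one, ← diagonalOp.commutes]
    convert hconst using 2
    funext n
    simp [c]
  simpa [smul_smul, inv_mul_cancel₀ hc] using Submodule.smul_mem _ c⁻¹ hc1

theorem IsTwoSided.one_mem_endImage_of_diagonalOp (hI : IsTwoSided (K := K) (A := ↥(A1 K)) I)
    (hne : I ≠ ⊥) {χ : ℕ → K} (h : diagonalOp χ ∈ endImage I) (hχ : EventuallyRational χ)
    (hfreq : ∃ᶠ n in atTop, χ n ≠ 0) : (1 : Module.End K K[X]) ∈ endImage I := by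
  obtain ⟨f, g, hg, hfg⟩ := hχ
  have hf : f ≠ 0 := by
    rintro rfl
    refine hfreq ?_
    filter_upwards [hfg, eventually_eval_natCast_ne_zero hg] with n h₁ h₂
    simpa [h₂] using h₁
  refine hI.one_mem_endImage_of_diagonalOp_eval hf ?_
  have hdiff : diagonalOp χ * diagonalOp (fun n => g.eval (n : K)) -
      diagonalOp (fun n => f.eval (n : K)) ∈ endImage I := by
    refine hI.mem_endImage_of_eventually_eq_zero hne
      (sub_mem (mul_mem (mem_A1_of_mem_endImage h) (diagonalOp_eval_mem_A1 g))
        (diagonalOp_eval_mem_A1 f)) (hfg.mono fun n hn => ?_)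
    rw [← map_mul, ← map_sub, diagonalOp_X_pow]
    simp [hn]
  simpa using sub_mem (hI.mul_mem_endImage_right (diagonalOp_eval_mem_A1 g) h) hdiff

/-- Lagrange interpolation in the eigenvalues of `[H, ·]` isolates one diagonal. -/
theorem IsTwoSided.exists_mem_endImage_diagEntry_eq (hI : IsTwoSided (K := K) (A := ↥(A1 K)) I)
    {u : Module.End K K[X]} (hu : u ∈ endImage I) {D : ℕ} (hD : IsBanded u D) (d : ℤ) :
    ∃ w ∈ endImage I, ∃ c : K, c ≠ 0 ∧
      ∀ e n, diagEntry w e n = if e = d then c * diagEntry u d n else 0 := by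
  have key (T : Finset ℤ) : ∃ w ∈ endImage I,
      ∀ e n, diagEntry w e n = (∏ t ∈ T, ((e : K) - t)) * diagEntry u e n := by
    classical
    induction T using Finset.induction_on with
    | empty => exact ⟨u, hu, by simp⟩
    | insert a T ha ih =>
      obtain ⟨w, hw, hwe⟩ := ih
      have hH : dO K * xO K ∈ A1 K := mul_mem dO_mem_A1 xO_mem_A1
      refine ⟨dO K * xO K * w - w * (dO K * xO K) - (a : K) • w, ?_, fun e n => ?_⟩
      · exact sub_mem (sub_mem (hI.mul_mem_endImage_left hH hw)
          (hI.mul_mem_endImage_right hH hw)) (Submodule.smul_mem _ _ hw)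
      · rw [diagEntry_sub, diagEntry_commutator_dO_mul_xO, diagEntry_smul, hwe,
          Finset.prod_insert ha]
        ring
  obtain ⟨w, hw, hwe⟩ := key ((Finset.Icc (-(D : ℤ)) D).erase d)
  refine ⟨w, hw, ∏ t ∈ (Finset.Icc (-(D : ℤ)) D).erase d, ((d : K) - t),
    Finset.prod_ne_zero_iff.2 fun t ht => sub_ne_zero.2 ?_, fun e n => ?_⟩
  · exact_mod_cast (Finset.ne_of_mem_erase ht).symm
  rw [hwe]
  split_ifs with he
  · rw [he]
  by_cases hmem : e ∈ Finset.Icc (-(D : ℤ)) D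
  · rw [Finset.prod_eq_zero (Finset.mem_erase.2 ⟨he, hmem⟩) (sub_self (e : K)), zero_mul]
  · rw [hD.diagEntry_eq_zero_of_notMem hmem, mul_zero]

/-- The witness is `∂ ^ d` for `d ≥ 0` and `x ^ (-d)` for `d < 0`. -/
theorem exists_mul_eq_diagonalOp {w : Module.End K K[X]} {d : ℤ} {χ : ℕ → K}
    (hw : ∀ e n, diagEntry w e n = if e = d then χ n else 0) :
    ∃ a ∈ A1 K, ∃ ρ : ℕ → K, EventuallyRational ρ ∧ (∀ᶠ n in atTop, ρ n ≠ 0) ∧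
      a * w = diagonalOp (ρ * χ) := by
  have hwX (n : ℕ) : w (X ^ n) = χ n • X ^ (n + d).toNat := by
    rw [apply_X_pow_eq_sum {d} fun e he => by rw [hw, if_neg (by simpa using he)],
      Finset.sum_singleton, hw, if_pos rfl]
  rcases le_or_gt 0 d with hd | hd
  · lift d to ℕ using hd
    refine ⟨dO K ^ d, pow_mem dO_mem_A1 d, fun n => ((n + d).descFactorial d : K), ?_,
      .of_forall fun n => Nat.cast_ne_zero.2 (by simp [Nat.descFactorial_eq_zero_iff_lt]),
      lhom_ext_X_pow fun n => ?_⟩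
    · refine (EventuallyRational.polynomial_eval ((descPochhammer K d).comp (X + C (d : K)))).congr
        (.of_forall fun n => ?_)
      simp [← descPochhammer_eval_eq_descFactorial]
    · simp [hwX, dO_pow_X_pow, smul_smul, mul_comm, show ((n : ℤ) + d).toNat = n + d by omega]
  · obtain ⟨k, rfl⟩ : ∃ k : ℕ, d = -k := ⟨d.natAbs, by omega⟩
    refine ⟨xO K ^ k, pow_mem xO_mem_A1 k, 1, .const 1, .of_forall fun _ => one_ne_zero,
      lhom_ext_X_pow fun n => ?_⟩
    rcases lt_or_ge ((n : ℤ) + -k) 0 with h | h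
    · have hχ : χ n = 0 := by simpa using (hw (-k) n).symm.trans (diagEntry_of_neg h)
      simp [hwX, hχ]
    · simp [hwX, xO_pow_X_pow, show (n + -(k : ℤ)).toNat + k = n by omega]

theorem IsTwoSided.eq_top_of_not_le_fIdeal (hI : IsTwoSided (K := K) (A := ↥(A1 K)) I)
    (hne : I ≠ ⊥) (hIF : ¬I ≤ fIdeal K) : I = ⊤ := by
  obtain ⟨u, huI, huF⟩ := SetLike.not_le_iff_exists.1 hIF
  obtain ⟨⟨D, hD⟩, hrat⟩ := isBanded_and_eventuallyRational_of_mem_A1 u.2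
  obtain ⟨d, hd⟩ : ∃ d, ∃ᶠ n in atTop, diagEntry (u : Module.End K K[X]) d n ≠ 0 := by
    by_contra! hzero
    refine huF (mem_fIdeal_iff.2 ?_)
    filter_upwards [(Finset.Icc (-(D : ℤ)) D).eventually_all.2 fun d _ => hzero d]
      with n hn
    rw [apply_X_pow_eq_sum _ fun e he => hD.diagEntry_eq_zero_of_notMem he n]
    exact Finset.sum_eq_zero fun e he => by simp [hn e he]
  obtain ⟨w, hwI, c, hc, hw⟩ := hI.exists_mem_endImage_diagEntry_eq (coe_mem_endImage.2 huI) hD d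
  obtain ⟨a, ha, ρ, hρ, hρ0, haw⟩ := exists_mul_eq_diagonalOp hw
  have h1 := hI.one_mem_endImage_of_diagonalOp hne (haw ▸ hI.mul_mem_endImage_left ha hwI)
    (hρ.mul ((EventuallyRational.const c).mul (hrat d)))
    (hd.mp (hρ0.mono fun n hρn hdn => mul_ne_zero hρn (mul_ne_zero hc hdn)))
  rw [← OneMemClass.coe_one (A1 K), coe_mem_endImage] at h1
  exact (Submodule.eq_top_iff'.2 fun x => by simpa using (hI 1 h1 x).1)

end Simplicity

end

/-- `F` is the unique proper two-sided ideal of the Jacobian algebra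
`𝔸₁`; in particular it is a maximal ideal and every nonzero two-sided ideal contains
it. -/
theorem stmt3 (K : Type*) [Field K] [CharZero K] :
    ∃ Fid : Submodule K ↥(A1 K),
      (Fid : Set ↥(A1 K)) = FCar K ∧ IsTwoSided (K := K) (A := ↥(A1 K)) Fid ∧ Fid ≠ ⊥ ∧ Fid ≠ ⊤ ∧
      ∀ I : Submodule K ↥(A1 K), IsTwoSided (K := K) (A := ↥(A1 K)) I → I ≠ ⊥ →
        Fid ≤ I ∧ (I ≠ ⊤ → I = Fid) := by
  refine ⟨fIdeal K, rfl, fIdeal_isTwoSided, fIdeal_ne_bot, fIdeal_ne_top, fun I hI hne =>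
    ⟨hI.fIdeal_le hne, fun htop => le_antisymm ?_ (hI.fIdeal_le hne)⟩⟩
  by_contra hIF
  exact htop (hI.eq_top_of_not_le_fIdeal hne hIF)
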